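/- Let {x_k} be the RK iterates for the system Ãx ≈ b̃ with arbitrary initial point x_0 ∈ ℝⁿ. Let σ̃_j > 0 be a nonzero singular value of Ã with associated left singular vector ũ_j ∈ ℝᵐ and right singular vector ṽ_j ∈ ℝⁿ (unit vectors with Ã ṽ_j = σ̃_j ũ_j and Ãᵀ ũ_j = σ̃_j ṽ_j). Then for every x_* ∈ ℝⁿ and every k ≥ 0: 𝔼⟨x_k − x_0ⁿ − x_*ʳ, ṽ_j⟩ = (1 − σ̃_j²/‖Ã‖_F²)^k ⟨x_0ʳ − x_*ʳ, ṽ_j⟩ − [1 − (1 − σ̃_j²/‖Ã‖_F²)^k] · ⟨Ã x_* − b̃, ũ_j⟩/σ̃_j. -/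

import Mathlib

open Matrix

noncomputable section

namespace RK

/-- The Euclidean inner product on `Fin n → ℝ`. -/
def dot {n : ℕ} (v w : Fin n → ℝ) : ℝ := ∑ i, v i * w i

/-- The squared Euclidean norm on `Fin n → ℝ`. -/
def normSq {n : ℕ} (v : Fin n → ℝ) : ℝ := ∑ i, v i ^ 2

/-- The Euclidean norm on `Fin n → ℝ`. -/
def euclNorm {n : ℕ} (v : Fin n → ℝ) : ℝ := Real.sqrt (normSq v)

/-- The squared Frobenius norm of a matrix. -/
def frobSq {m n : ℕ} (A : Matrix (Fin m) (Fin n) ℝ) : ℝ := ∑ i, ∑ j, A i j ^ 2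

/-- One step of the (randomized) Kaczmarz method for the system `A x ≈ b`, using row `i`:
`x ↦ x - ((aᵢᵀ x - bᵢ) / ‖aᵢ‖²) aᵢ`. -/
def rkStep {m n : ℕ} (A : Matrix (Fin m) (Fin n) ℝ) (b : Fin m → ℝ) (i : Fin m)
    (x : Fin n → ℝ) : Fin n → ℝ :=
  x - ((dot (A i) x - b i) / normSq (A i)) • A i

/-- `rkExp A b x0 k f` is the expectation `𝔼 f(x_k)` of `f` evaluated at the `k`-th iterate of the
randomized Kaczmarz algorithm applied to `A x ≈ b` started at `x0`, where at each step the row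
index `i` is drawn independently at random with probability `‖aᵢ‖² / ‖A‖_F²`. -/
def rkExp {m n : ℕ} (A : Matrix (Fin m) (Fin n) ℝ) (b : Fin m → ℝ) (x0 : Fin n → ℝ) :
    ℕ → ((Fin n → ℝ) → ℝ) → ℝ
  | 0, f => f x0
  | k + 1, f => rkExp A b x0 k fun x => ∑ i, normSq (A i) / frobSq A * f (rkStep A b i x)

/-- The four Penrose conditions: `B` is the Moore–Penrose pseudoinverse of `A`. -/
def IsMoorePenrose {m n : ℕ} (A : Matrix (Fin m) (Fin n) ℝ)
    (B : Matrix (Fin n) (Fin m) ℝ) : Prop :=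
  A * B * A = A ∧ B * A * B = B ∧ (A * B)ᵀ = A * B ∧ (B * A)ᵀ = B * A

/-- The row space `range(Aᵀ)` of a matrix `A`. -/
def rowSpace {m n : ℕ} (A : Matrix (Fin m) (Fin n) ℝ) : Set (Fin n → ℝ) :=
  {v | ∃ u : Fin m → ℝ, v = Aᵀ.mulVec u}

/-- The null space (kernel) of a matrix `A`. -/
def nullSpace {m n : ℕ} (A : Matrix (Fin m) (Fin n) ℝ) : Set (Fin n → ℝ) :=
  {v | A.mulVec v = 0}

/-- `σ` is the smallest nonzero singular value of `A`: `σ > 0`, `σ²` is an eigenvalue of `AᵀA`,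
and `σ²` is less than or equal to every nonzero eigenvalue of `AᵀA`. -/
def IsSmallestNonzeroSingularValue {m n : ℕ} (A : Matrix (Fin m) (Fin n) ℝ) (σ : ℝ) : Prop :=
  0 < σ ∧ (∃ v : Fin n → ℝ, v ≠ 0 ∧ (Aᵀ * A).mulVec v = σ ^ 2 • v) ∧
    ∀ μ : ℝ, μ ≠ 0 → (∃ v : Fin n → ℝ, v ≠ 0 ∧ (Aᵀ * A).mulVec v = μ • v) → σ ^ 2 ≤ μ

/-!
Averaging the RK projections over rows drawn with probability `‖aᵢ‖² / ‖A‖_F²` replaces the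
random projection by `AᵀA / ‖A‖_F²`, and `ṽ` is an eigenvector of `AᵀA` with eigenvalue `σ̃²`.
Hence the affine functional `x ↦ ⟨x, ṽ⟩ - ⟨b̃, ũ⟩ / σ̃` is multiplied by exactly
`1 - σ̃² / ‖Ã‖_F²` in expectation at every step. Null-space components are orthogonal to
`ṽ = Ãᵀũ / σ̃`, and `⟨Ãx⋆ - b̃, ũ⟩ / σ̃ = ⟨x⋆ʳ, ṽ⟩ - ⟨b̃, ũ⟩ / σ̃`.
-/

lemma dot_eq_dotProduct {n : ℕ} (v w : Fin n → ℝ) : dot v w = v ⬝ᵥ w := rfl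

lemma normSq_pos {n : ℕ} {w : Fin n → ℝ} (hw : w ≠ 0) : 0 < normSq w := by
  obtain ⟨j, hj⟩ := Function.ne_iff.mp hw
  exact Finset.sum_pos' (fun i _ => sq_nonneg (w i)) ⟨j, Finset.mem_univ j, sq_pos_of_ne_zero hj⟩

lemma frobSq_eq_sum_normSq {m n : ℕ} (A : Matrix (Fin m) (Fin n) ℝ) :
    frobSq A = ∑ i, normSq (A i) := rfl

lemma frobSq_pos {m n : ℕ} {A : Matrix (Fin m) (Fin n) ℝ} (hA : A ≠ 0) : 0 < frobSq A := by
  obtain ⟨i, hi⟩ := Function.ne_iff.mp hA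
  exact Finset.sum_pos' (fun i _ => Finset.sum_nonneg fun j _ => sq_nonneg (A i j))
    ⟨i, Finset.mem_univ i, normSq_pos hi⟩

lemma sum_rowWeights {m n : ℕ} {A : Matrix (Fin m) (Fin n) ℝ} (hF : frobSq A ≠ 0) :
    ∑ i, normSq (A i) / frobSq A = 1 := by
  rw [← Finset.sum_div, ← frobSq_eq_sum_normSq, div_self hF]

lemma dotProduct_rkStep {m n : ℕ} (A : Matrix (Fin m) (Fin n) ℝ) (b : Fin m → ℝ) (i : Fin m)
    (x v : Fin n → ℝ) :
    rkStep A b i x ⬝ᵥ v = x ⬝ᵥ v - ((A *ᵥ x) i - b i) / normSq (A i) * (A *ᵥ v) i := by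
  simp only [rkStep, dot_eq_dotProduct, sub_dotProduct, smul_dotProduct, smul_eq_mul]
  rfl

section Expectation

variable {m n : ℕ} (A : Matrix (Fin m) (Fin n) ℝ) (b : Fin m → ℝ)

def rkStepExp (f : (Fin n → ℝ) → ℝ) (x : Fin n → ℝ) : ℝ :=
  ∑ i, normSq (A i) / frobSq A * f (rkStep A b i x)

lemma rkExp_succ (x0 : Fin n → ℝ) (k : ℕ) (f : (Fin n → ℝ) → ℝ) :
    rkExp A b x0 (k + 1) f = rkExp A b x0 k (rkStepExp A b f) := rfl

lemma rkStepExp_const_mul (f : (Fin n → ℝ) → ℝ) (a : ℝ) :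
    rkStepExp A b (fun x => a * f x) = fun x => a * rkStepExp A b f x := by
  funext x
  simp only [rkStepExp, Finset.mul_sum]
  exact Finset.sum_congr rfl fun i _ => by ring

lemma rkExp_const_mul (x0 : Fin n → ℝ) (k : ℕ) (f : (Fin n → ℝ) → ℝ) (a : ℝ) :
    rkExp A b x0 k (fun x => a * f x) = a * rkExp A b x0 k f := by
  induction k generalizing f with
  | zero => rfl
  | succ k ih => rw [rkExp_succ, rkExp_succ, rkStepExp_const_mul, ih]

variable {A}

lemma rkStepExp_add_const (hF : frobSq A ≠ 0) (f : (Fin n → ℝ) → ℝ) (c : ℝ) :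
    rkStepExp A b (fun x => f x + c) = fun x => rkStepExp A b f x + c := by
  funext x
  simp only [rkStepExp, mul_add, Finset.sum_add_distrib, ← Finset.sum_mul, sum_rowWeights hF,
    one_mul]

lemma rkExp_add_const (hF : frobSq A ≠ 0) (x0 : Fin n → ℝ) (k : ℕ) (f : (Fin n → ℝ) → ℝ)
    (c : ℝ) : rkExp A b x0 k (fun x => f x + c) = rkExp A b x0 k f + c := by
  induction k generalizing f with
  | zero => rfl
  | succ k ih => rw [rkExp_succ, rkExp_succ, rkStepExp_add_const b hF, ih]

lemma rkExp_eq_pow_mul_of_rkStepExp_eq {f : (Fin n → ℝ) → ℝ} {ρ : ℝ}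
    (hf : rkStepExp A b f = fun x => ρ * f x) (x0 : Fin n → ℝ) (k : ℕ) :
    rkExp A b x0 k f = ρ ^ k * f x0 := by
  induction k with
  | zero => simp [rkExp]
  | succ k ih =>
    rw [rkExp_succ, hf, rkExp_const_mul, ih, pow_succ', mul_assoc]

lemma rkStepExp_dotProduct_sub_const (hF : frobSq A ≠ 0) (hrows : ∀ i, A i ≠ 0) (v : Fin n → ℝ)
    (d : ℝ) (x : Fin n → ℝ) :
    rkStepExp A b (fun y => y ⬝ᵥ v - d) x
      = x ⬝ᵥ v - d - (A *ᵥ x - b) ⬝ᵥ (A *ᵥ v) / frobSq A := by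
  have hterm : ∀ i, normSq (A i) / frobSq A * (rkStep A b i x ⬝ᵥ v - d)
      = normSq (A i) / frobSq A * (x ⬝ᵥ v - d)
        - (A *ᵥ x - b) i * (A *ᵥ v) i / frobSq A := by
    intro i
    rw [dotProduct_rkStep]
    field_simp [(normSq_pos (hrows i)).ne']
    simp only [Pi.sub_apply]
    ring
  rw [rkStepExp, Finset.sum_congr rfl fun i _ => hterm i, Finset.sum_sub_distrib,
    ← Finset.sum_mul, sum_rowWeights hF, one_mul, ← Finset.sum_div]
  rfl

end Expectation

section SingularPair

variable {m n : ℕ} {A : Matrix (Fin m) (Fin n) ℝ} {σ : ℝ} {u : Fin m → ℝ} {v : Fin n → ℝ}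

lemma mulVec_dotProduct_of_transpose_mulVec_eq (hAtu : Aᵀ *ᵥ u = σ • v) (x : Fin n → ℝ) :
    (A *ᵥ x) ⬝ᵥ u = σ * x ⬝ᵥ v := by
  rw [dotProduct_comm, dotProduct_mulVec, ← mulVec_transpose, hAtu, smul_dotProduct,
    dotProduct_comm, smul_eq_mul]

lemma dotProduct_eq_zero_of_mem_nullSpace (hσ : σ ≠ 0) (hAtu : Aᵀ *ᵥ u = σ • v)
    {w : Fin n → ℝ} (hw : w ∈ nullSpace A) : w ⬝ᵥ v = 0 := by
  have h := mulVec_dotProduct_of_transpose_mulVec_eq hAtu w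
  rw [show A *ᵥ w = 0 from hw, zero_dotProduct, eq_comm, mul_eq_zero] at h
  exact h.resolve_left hσ

lemma rkStepExp_of_singularPair (b : Fin m → ℝ) (hσ : σ ≠ 0) (hF : frobSq A ≠ 0)
    (hrows : ∀ i, A i ≠ 0) (hAv : A *ᵥ v = σ • u) (hAtu : Aᵀ *ᵥ u = σ • v) :
    rkStepExp A b (fun x => x ⬝ᵥ v - b ⬝ᵥ u / σ)
      = fun x => (1 - σ ^ 2 / frobSq A) * (x ⬝ᵥ v - b ⬝ᵥ u / σ) := by
  funext x
  rw [rkStepExp_dotProduct_sub_const b hF hrows, hAv, dotProduct_smul, sub_dotProduct,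
    mulVec_dotProduct_of_transpose_mulVec_eq hAtu, smul_eq_mul]
  field_simp

end SingularPair

theorem rk_singular_vector_dynamics_general {m n : ℕ}
    (At : Matrix (Fin m) (Fin n) ℝ) (bt : Fin m → ℝ)
    (hAt : At ≠ 0) (hrows : ∀ i, At i ≠ 0)
    (σj : ℝ) (hσj : 0 < σj) (u : Fin m → ℝ) (v : Fin n → ℝ)
    (hAv : At.mulVec v = σj • u) (hAtu : Atᵀ.mulVec u = σj • v)
    (x0 xstar x0r x0n xsr xsn : Fin n → ℝ)
    (hx0n : x0n ∈ nullSpace At) (hx0 : x0 = x0r + x0n)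
    (hxsn : xsn ∈ nullSpace At) (hxs : xstar = xsr + xsn)
    (k : ℕ) :
    rkExp At bt x0 k (fun x => dot (x - x0n - xsr) v) =
      (1 - σj ^ 2 / frobSq At) ^ k * dot (x0r - xsr) v
        - (1 - (1 - σj ^ 2 / frobSq At) ^ k) * (dot (At.mulVec xstar - bt) u / σj) := by
  have hσ : σj ≠ 0 := hσj.ne'
  have hF : frobSq At ≠ 0 := (frobSq_pos hAt).ne'
  have hx0n_v := dotProduct_eq_zero_of_mem_nullSpace hσ hAtu hx0n
  have hxsn_v := dotProduct_eq_zero_of_mem_nullSpace hσ hAtu hxsn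
  have hshift : (fun x => dot (x - x0n - xsr) v)
      = fun x => (x ⬝ᵥ v - bt ⬝ᵥ u / σj) + (bt ⬝ᵥ u / σj - xsr ⬝ᵥ v) := by
    funext x
    rw [dot_eq_dotProduct, sub_dotProduct, sub_dotProduct, hx0n_v]
    ring
  rw [hshift, rkExp_add_const bt hF, rkExp_eq_pow_mul_of_rkStepExp_eq bt
    (rkStepExp_of_singularPair bt hσ hF hrows hAv hAtu)]
  simp only [dot_eq_dotProduct, hx0, hxs, add_dotProduct, sub_dotProduct, mulVec_add,
    mulVec_dotProduct_of_transpose_mulVec_eq hAtu, hx0n_v, hxsn_v]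
  field_simp
  ring

/-- **Theorem 3.2 (convergence along singular vectors, doubly noisy case).** For the RK iterates
of `Ãx ≈ b̃` with arbitrary `x₀`, any nonzero singular value `σ̃ⱼ > 0` of `Ã` with associated
left/right singular vectors `ũⱼ, ṽⱼ`, and any `x⋆`:
`𝔼⟨x_k − x₀ⁿ − x⋆ʳ, ṽⱼ⟩ = (1 − σ̃ⱼ²/‖Ã‖_F²)^k ⟨x₀ʳ − x⋆ʳ, ṽⱼ⟩
   − [1 − (1 − σ̃ⱼ²/‖Ã‖_F²)^k] ⟨Ã x⋆ − b̃, ũⱼ⟩ / σ̃ⱼ`. -/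
theorem rk_singular_vector_dynamics {m n : ℕ}
    (At : Matrix (Fin m) (Fin n) ℝ) (bt : Fin m → ℝ)
    (hAt : At ≠ 0) (hrows : ∀ i, At i ≠ 0)
    (σj : ℝ) (hσj : 0 < σj) (u : Fin m → ℝ) (v : Fin n → ℝ)
    (hu : normSq u = 1) (hv : normSq v = 1)
    (hAv : At.mulVec v = σj • u) (hAtu : Atᵀ.mulVec u = σj • v)
    (x0 xstar x0r x0n xsr xsn : Fin n → ℝ)
    (hx0r : x0r ∈ rowSpace At) (hx0n : x0n ∈ nullSpace At) (hx0 : x0 = x0r + x0n)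
    (hxsr : xsr ∈ rowSpace At) (hxsn : xsn ∈ nullSpace At) (hxs : xstar = xsr + xsn)
    (k : ℕ) :
    rkExp At bt x0 k (fun x => dot (x - x0n - xsr) v) =
      (1 - σj ^ 2 / frobSq At) ^ k * dot (x0r - xsr) v
        - (1 - (1 - σj ^ 2 / frobSq At) ^ k) * (dot (At.mulVec xstar - bt) u / σj) :=
  rk_singular_vector_dynamics_general At bt hAt hrows σj hσj u v hAv hAtu x0 xstar x0r x0n xsr xsn
    hx0n hx0 hxsn hxs k

end RK
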